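/- Let g = g₀ ⊕ g₁ with [g₁,g₁] = 0. If M is a finite-dimensional Z-graded g-module (g₀ acting in degree 0, g₁ in degree 1) that is projective as an ungraded g-module, then M is projective in the category of graded g-modules with degree-preserving morphisms. -/

import Mathlib

universe u

attribute [local instance 100] LieRing.ofAssociativeRing

/-- A module over the Lie superalgebra `g = g₀ ⊕ g₁` with `[g₁,g₁] = 0`. -/
structure GSMod (k : Type u) [Field k] (g₀ : Type u) [LieRing g₀] [LieAlgebra k g₀]
    (g₁ : Type u) [AddCommGroup g₁] [Module k g₁] [LieRingModule g₀ g₁]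
    (V : Type u) [AddCommGroup V] [Module k V] where
  ρ₀ : g₀ →ₗ⁅k⁆ Module.End k V
  ρ₁ : g₁ →ₗ[k] Module.End k V
  anticomm : ∀ e f : g₁, ρ₁ e * ρ₁ f + ρ₁ f * ρ₁ e = 0
  compat : ∀ (x : g₀) (e : g₁), ρ₀ x * ρ₁ e - ρ₁ e * ρ₀ x = ρ₁ ⁅x, e⁆

/-- A homomorphism of `g`-modules. -/
def IsGHom {k g₀ g₁ V W : Type u} [Field k] [LieRing g₀] [LieAlgebra k g₀]
    [AddCommGroup g₁] [Module k g₁] [LieRingModule g₀ g₁]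
    [AddCommGroup V] [Module k V] [AddCommGroup W] [Module k W]
    (σV : GSMod k g₀ g₁ V) (σW : GSMod k g₀ g₁ W) (f : V →ₗ[k] W) : Prop :=
  (∀ (x : g₀) (v : V), f (σV.ρ₀ x v) = σW.ρ₀ x (f v)) ∧
  (∀ (e : g₁) (v : V), f (σV.ρ₁ e v) = σW.ρ₁ e (f v))

/-- Projectivity in the category of finite-dimensional `g`-modules. -/
def IsProjGMod {k g₀ g₁ P : Type u} [Field k] [LieRing g₀] [LieAlgebra k g₀]
    [AddCommGroup g₁] [Module k g₁] [LieRingModule g₀ g₁]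
    [AddCommGroup P] [Module k P] (σP : GSMod k g₀ g₁ P) : Prop :=
  ∀ (W L : Type u) [AddCommGroup W] [Module k W] [AddCommGroup L] [Module k L]
    [FiniteDimensional k W] [FiniteDimensional k L]
    (σW : GSMod k g₀ g₁ W) (σL : GSMod k g₀ g₁ L)
    (f : W →ₗ[k] L) (φ : P →ₗ[k] L),
    Function.Surjective f → IsGHom σW σL f → IsGHom σP σL φ →
    ∃ ψ : P →ₗ[k] W, IsGHom σP σW ψ ∧ f ∘ₗ ψ = φ

/-- A `ℤ`-grading on a `g`-module `V = ⊕ᵢ Vⁱ`: the submodules `𝒱 i` form an internal direct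
sum, `g₀` acts in degree `0` and `g₁` acts in degree `1`. -/
def IsGrading {k g₀ g₁ V : Type u} [Field k] [LieRing g₀] [LieAlgebra k g₀]
    [AddCommGroup g₁] [Module k g₁] [LieRingModule g₀ g₁]
    [AddCommGroup V] [Module k V]
    (σ : GSMod k g₀ g₁ V) (𝒱 : ℤ → Submodule k V) : Prop :=
  DirectSum.IsInternal 𝒱 ∧
  (∀ (i : ℤ) (x : g₀), ∀ v ∈ 𝒱 i, σ.ρ₀ x v ∈ 𝒱 i) ∧
  (∀ (i : ℤ) (e : g₁), ∀ v ∈ 𝒱 i, σ.ρ₁ e v ∈ 𝒱 (i + 1))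

/-- A degree-preserving (graded) map between graded modules. -/
def IsGradedMap {k V W : Type u} [Field k] [AddCommGroup V] [Module k V]
    [AddCommGroup W] [Module k W]
    (𝒱 : ℤ → Submodule k V) (𝒲 : ℤ → Submodule k W) (f : V →ₗ[k] W) : Prop :=
  ∀ i : ℤ, ∀ v ∈ 𝒱 i, f v ∈ 𝒲 i

/-!
Let `ψ` be any `g`-module lift of `φ` through `f`, given by ungraded projectivity. Its degree-zero
part, `v ↦ (ψ v)ᵢ` for `v` of degree `i`, is again a lift of `φ`, since `f` and `φ` preserve
degrees, and it is still `g`-equivariant, because `g₀` and `g₁` act by maps that are homogeneous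
(of degree `0` and `1`), and taking the degree-zero part commutes with composing on both sides by
homogeneous maps of the same degree.
-/

namespace DirectSum

variable {ι R V V' W W' : Type*} [Semiring R]
  [AddCommMonoid V] [Module R V] [AddCommMonoid V'] [Module R V']
  [AddCommMonoid W] [Module R W] [AddCommMonoid W'] [Module R W']
  (𝒱 : ι → Submodule R V) (𝒱' : ι → Submodule R V')
  (𝒲 : ι → Submodule R W) (𝒲' : ι → Submodule R W')

def IsHomogeneousOfDegree [Add ι] (d : ι) (F : V →ₗ[R] W) : Prop :=
  ∀ i, ∀ v ∈ 𝒱 i, F v ∈ 𝒲 (i + d)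

variable {𝒱 𝒱' 𝒲 𝒲'}

theorem isHomogeneousOfDegree_zero_iff [AddZeroClass ι] {F : V →ₗ[R] W} :
    IsHomogeneousOfDegree 𝒱 𝒲 0 F ↔ ∀ i, ∀ v ∈ 𝒱 i, F v ∈ 𝒲 i := by
  simp only [IsHomogeneousOfDegree, add_zero]

variable [DecidableEq ι] [Decomposition 𝒱] [Decomposition 𝒱'] [Decomposition 𝒲] [Decomposition 𝒲']

theorem IsHomogeneousOfDegree.decompose_apply [Add ι] [IsRightCancelAdd ι] {d : ι}
    {B : W →ₗ[R] W'} (hB : IsHomogeneousOfDegree 𝒲 𝒲' d B) (w : W) (i : ι) :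
    (decompose 𝒲' (B w) (i + d) : W') = B (decompose 𝒲 w i) := by
  induction w using Decomposition.inductionOn 𝒲 with
  | zero => simp
  | @homogeneous j w =>
    obtain rfl | hji := eq_or_ne j i
    · rw [decompose_of_mem_same 𝒲' (hB j w w.2), decompose_coe, of_eq_same]
    · rw [decompose_of_mem_ne 𝒲' (hB j w w.2) (by simpa using hji),
        decompose_of_mem_ne 𝒲 w.2 hji, map_zero]
  | add w w' hw hw' => simp [hw, hw']

variable (𝒱 𝒲)

noncomputable def degZeroPart (F : V →ₗ[R] W) : V →ₗ[R] W :=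
  toModule R ι W (fun i ↦ (𝒲 i).subtype ∘ₗ component R ι _ i ∘ₗ
    (decomposeLinearEquiv 𝒲).toLinearMap ∘ₗ F ∘ₗ (𝒱 i).subtype) ∘ₗ
  (decomposeLinearEquiv 𝒱).toLinearMap

variable {𝒱 𝒲}

theorem degZeroPart_apply_of_mem (F : V →ₗ[R] W) {i : ι} {v : V} (hv : v ∈ 𝒱 i) :
    degZeroPart 𝒱 𝒲 F v = decompose 𝒲 (F v) i := by
  lift v to 𝒱 i using hv
  rw [degZeroPart, LinearMap.comp_apply, LinearEquiv.coe_coe, decomposeLinearEquiv_apply_coe,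
    toModule_lof]
  rfl

theorem degZeroPart_mem (F : V →ₗ[R] W) {i : ι} {v : V} (hv : v ∈ 𝒱 i) :
    degZeroPart 𝒱 𝒲 F v ∈ 𝒲 i := by
  rw [degZeroPart_apply_of_mem F hv]
  exact SetLike.coe_mem _

theorem degZeroPart_eq_self {F : V →ₗ[R] W} (hF : ∀ i, ∀ v ∈ 𝒱 i, F v ∈ 𝒲 i) :
    degZeroPart 𝒱 𝒲 F = F := by
  refine decompose_lhom_ext 𝒱 fun i ↦ LinearMap.ext fun v ↦ ?_
  simp only [LinearMap.comp_apply, Submodule.coe_subtype]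
  rw [degZeroPart_apply_of_mem F v.2, decompose_of_mem_same 𝒲 (hF i v v.2)]

theorem degZeroPart_comm [Add ι] [IsRightCancelAdd ι] {d : ι}
    {A : V →ₗ[R] V'} {B : W →ₗ[R] W'} (hA : IsHomogeneousOfDegree 𝒱 𝒱' d A)
    (hB : IsHomogeneousOfDegree 𝒲 𝒲' d B) {F : V →ₗ[R] W} {G : V' →ₗ[R] W'}
    (h : G ∘ₗ A = B ∘ₗ F) :
    degZeroPart 𝒱' 𝒲' G ∘ₗ A = B ∘ₗ degZeroPart 𝒱 𝒲 F := by
  refine decompose_lhom_ext 𝒱 fun i ↦ LinearMap.ext fun v ↦ ?_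
  simp only [LinearMap.comp_apply, Submodule.coe_subtype]
  rw [degZeroPart_apply_of_mem G (hA i v v.2), degZeroPart_apply_of_mem F v.2,
    ← LinearMap.comp_apply G, h, LinearMap.comp_apply, hB.decompose_apply]

end DirectSum

section GradedGSMod

variable {k g₀ g₁ V W : Type u} [Field k] [LieRing g₀] [LieAlgebra k g₀]
  [AddCommGroup g₁] [Module k g₁] [LieRingModule g₀ g₁]
  [AddCommGroup V] [Module k V] [AddCommGroup W] [Module k W]
  {σV : GSMod k g₀ g₁ V} {σW : GSMod k g₀ g₁ W} {𝒱 : ℤ → Submodule k V} {𝒲 : ℤ → Submodule k W}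

open DirectSum

theorem IsGrading.isHomogeneousOfDegree_ρ₀ (h : IsGrading σV 𝒱) (x : g₀) :
    IsHomogeneousOfDegree 𝒱 𝒱 0 (σV.ρ₀ x) :=
  isHomogeneousOfDegree_zero_iff.mpr fun i ↦ h.2.1 i x

theorem IsGrading.isHomogeneousOfDegree_ρ₁ (h : IsGrading σV 𝒱) (e : g₁) :
    IsHomogeneousOfDegree 𝒱 𝒱 1 (σV.ρ₁ e) :=
  fun i ↦ h.2.2 i e

theorem IsGHom.degZeroPart [Decomposition 𝒱] [Decomposition 𝒲] {ψ : V →ₗ[k] W}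
    (hψ : IsGHom σV σW ψ) (hV : IsGrading σV 𝒱) (hW : IsGrading σW 𝒲) :
    IsGHom σV σW (degZeroPart 𝒱 𝒲 ψ) :=
  ⟨fun x ↦ LinearMap.congr_fun <| degZeroPart_comm (hV.isHomogeneousOfDegree_ρ₀ x)
      (hW.isHomogeneousOfDegree_ρ₀ x) (LinearMap.ext (hψ.1 x)),
    fun e ↦ LinearMap.congr_fun <| degZeroPart_comm (hV.isHomogeneousOfDegree_ρ₁ e)
      (hW.isHomogeneousOfDegree_ρ₁ e) (LinearMap.ext (hψ.2 e))⟩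

end GradedGSMod

open DirectSum in
theorem stmt_9_general (k g₀ g₁ M : Type u) [Field k]
    [LieRing g₀] [LieAlgebra k g₀]
    [AddCommGroup g₁] [Module k g₁] [LieRingModule g₀ g₁]
    [AddCommGroup M] [Module k M]
    (σM : GSMod k g₀ g₁ M) (𝒨 : ℤ → Submodule k M) (hM : IsGrading σM 𝒨)
    (hproj : IsProjGMod σM) :
    ∀ (W L : Type u) [AddCommGroup W] [Module k W] [AddCommGroup L] [Module k L]
      [FiniteDimensional k W] [FiniteDimensional k L]
      (σW : GSMod k g₀ g₁ W) (σL : GSMod k g₀ g₁ L)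
      (𝒲 : ℤ → Submodule k W) (𝒧 : ℤ → Submodule k L),
      IsGrading σW 𝒲 → IsGrading σL 𝒧 →
      ∀ (f : W →ₗ[k] L) (φ : M →ₗ[k] L),
        Function.Surjective f → IsGHom σW σL f → IsGradedMap 𝒲 𝒧 f →
        IsGHom σM σL φ → IsGradedMap 𝒨 𝒧 φ →
        ∃ ψ : M →ₗ[k] W, IsGHom σM σW ψ ∧ IsGradedMap 𝒨 𝒲 ψ ∧ f ∘ₗ ψ = φ := by
  intro W L _ _ _ _ _ _ σW σL 𝒲 𝒧 hW hL f φ hf_surj hf hf_graded hφ hφ_graded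
  let _ := hM.1.chooseDecomposition
  let _ := hW.1.chooseDecomposition
  let _ := hL.1.chooseDecomposition
  obtain ⟨ψ, hψ, hψ_lift⟩ := hproj W L σW σL f φ hf_surj hf hφ
  refine ⟨degZeroPart 𝒨 𝒲 ψ, hψ.degZeroPart hM hW, fun i v hv ↦ degZeroPart_mem ψ hv, ?_⟩
  have h_id : IsHomogeneousOfDegree 𝒨 𝒨 0 (LinearMap.id : M →ₗ[k] M) :=
    isHomogeneousOfDegree_zero_iff.mpr fun _ _ hv ↦ hv
  have h_lift := degZeroPart_comm h_id (isHomogeneousOfDegree_zero_iff.mpr hf_graded)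
    (G := φ) (F := ψ) (by rw [LinearMap.comp_id, hψ_lift])
  rw [degZeroPart_eq_self hφ_graded, LinearMap.comp_id] at h_lift
  exact h_lift.symm

/-- Let `g = g₀ ⊕ g₁` with `[g₁,g₁] = 0`.  If `M` is a finite-dimensional
`ℤ`-graded `g`-module (`g₀` acting in degree 0, `g₁` in degree 1) that is projective as an
ungraded `g`-module, then `M` is projective in the category of finite-dimensional graded
`g`-modules with degree-preserving morphisms. -/
theorem stmt_9 (k g₀ g₁ M : Type u) [Field k]
    [LieRing g₀] [LieAlgebra k g₀]
    [AddCommGroup g₁] [Module k g₁] [LieRingModule g₀ g₁]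
    [AddCommGroup M] [Module k M] [FiniteDimensional k M]
    (σM : GSMod k g₀ g₁ M) (𝒨 : ℤ → Submodule k M) (hM : IsGrading σM 𝒨)
    (hproj : IsProjGMod σM) :
    ∀ (W L : Type u) [AddCommGroup W] [Module k W] [AddCommGroup L] [Module k L]
      [FiniteDimensional k W] [FiniteDimensional k L]
      (σW : GSMod k g₀ g₁ W) (σL : GSMod k g₀ g₁ L)
      (𝒲 : ℤ → Submodule k W) (𝒧 : ℤ → Submodule k L),
      IsGrading σW 𝒲 → IsGrading σL 𝒧 →
      ∀ (f : W →ₗ[k] L) (φ : M →ₗ[k] L),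
        Function.Surjective f → IsGHom σW σL f → IsGradedMap 𝒲 𝒧 f →
        IsGHom σM σL φ → IsGradedMap 𝒨 𝒧 φ →
        ∃ ψ : M →ₗ[k] W, IsGHom σM σW ψ ∧ IsGradedMap 𝒨 𝒲 ψ ∧ f ∘ₗ ψ = φ :=
  stmt_9_general k g₀ g₁ M σM 𝒨 hM hproj
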